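/- arXiv:2401.09309 — 3 statements merged into one kernel-verified Lean document; each statement's English description precedes it below -/
import Mathlib

section
/- Let f, f' ∈ A* = Hom_k(A,k) both satisfy the Fⁿ-rationality condition f(Fⁿ(a)) = f(a)^{qⁿ} and f'(Fⁿ(a)) = f'(a)^{qⁿ} for all a ∈ A. If f'(a) = f(x⁻¹ a y) for all a ∈ A for some x, y ∈ G, then there exist x₀, y₀ ∈ G(qⁿ) with f'(a) = f(x₀⁻¹ a y₀) for all a ∈ A. In other words, the Fⁿ-rational points of a (G × G)-orbit in A* form a single (G(qⁿ) × G(qⁿ))-orbit. -/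
open scoped BigOperators

namespace Shintani

variable {A : Type*} [NonUnitalRing A]

/-- The product of the non-empty word `a :: l` in a non-unital ring. -/
def wordProd : A → List A → A
  | a, [] => a
  | a, b :: l => wordProd (a * b) l

/-- A non-unital ring is nilpotent: there is `N ≥ 1` such that every product of `N`
elements vanishes. -/
def IsNilpotentRing (A : Type*) [NonUnitalRing A] : Prop :=
  ∃ N : ℕ, 0 < N ∧ ∀ (a : A) (l : List A), N ≤ l.length + 1 → wordProd a l = 0

/-- The algebra group `G = 1 + A` attached to the non-unital (nilpotent) ring `A`,
realized as the group of quasiregular elements of `A`, i.e. the units of the monoid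
structure `x * y = x + y + x * y` on `A` (`0` playing the role of `1 = 1 + 0`). -/
abbrev AlgGrp (A : Type*) [NonUnitalRing A] := (PreQuasiregular A)ˣ

/-- For `g = 1 + a` in the algebra group, `gval g = g - 1 = a`. -/
def gval (g : AlgGrp A) : A := g.val.val

lemma gval_injective : Function.Injective (gval (A := A)) := by
  intro u v h
  exact Units.ext (congrArg PreQuasiregular.mk h)

@[simp] lemma gval_one : gval (1 : AlgGrp A) = 0 := rfl

@[simp] lemma gval_mul (g h : AlgGrp A) :
    gval (g * h) = gval h + gval g + gval g * gval h := rfl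

/-- `1 + a ↦ 1 + F a` as a monoid homomorphism of `PreQuasiregular A`, for a ring
automorphism `F` of `A`. -/
def preqHom (F : A ≃+* A) : PreQuasiregular A →* PreQuasiregular A where
  toFun x := ⟨F x.val⟩
  map_one' := congrArg PreQuasiregular.mk (map_zero F)
  map_mul' x y := congrArg PreQuasiregular.mk (by simp)

/-- The group homomorphism `G → G`, `1 + a ↦ 1 + F a`, induced by a ring automorphism
`F` of `A` (e.g. by the Frobenius map). -/
def algGrpMap (F : A ≃+* A) : AlgGrp A →* AlgGrp A := Units.map (preqHom F)

@[simp] lemma gval_algGrpMap (F : A ≃+* A) (g : AlgGrp A) :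
    gval (algGrpMap F g) = F (gval g) := rfl

/-- Iterates of `algGrpMap F`. -/
def algGrpIter (F : A ≃+* A) : ℕ → (AlgGrp A →* AlgGrp A)
  | 0 => MonoidHom.id _
  | n + 1 => (algGrpMap F).comp (algGrpIter F n)

lemma gval_algGrpIter (F : A ≃+* A) (n : ℕ) (g : AlgGrp A) :
    gval (algGrpIter F n g) = (⇑F)^[n] (gval g) := by
  induction n generalizing g with
  | zero => rfl
  | succ n ih =>
      simp only [algGrpIter, MonoidHom.comp_apply, gval_algGrpMap, ih,
        Function.iterate_succ_apply']

/-- The additive subgroup `A(qⁿ) = {a ∈ A | Fⁿ(a) = a}` of elements fixed by `F^[n]`. -/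
def fixedAdd (F : A ≃+* A) (n : ℕ) : AddSubgroup A where
  carrier := {a | (⇑F)^[n] a = a}
  add_mem' := by
    intro a b ha hb
    simp only [Set.mem_setOf_eq] at *
    rw [iterate_map_add, ha, hb]
  zero_mem' := by
    simp only [Set.mem_setOf_eq]
    rw [iterate_map_zero]
  neg_mem' := by
    intro a ha
    simp only [Set.mem_setOf_eq] at *
    rw [iterate_map_neg, ha]

@[simp] lemma mem_fixedAdd {F : A ≃+* A} {n : ℕ} {a : A} :
    a ∈ fixedAdd F n ↔ (⇑F)^[n] a = a := Iff.rfl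

/-- The subgroup `G(qⁿ) = {g ∈ G | Fⁿ(g) = g}` of the algebra group. -/
def Gfix (F : A ≃+* A) (n : ℕ) : Subgroup (AlgGrp A) where
  carrier := {g | (⇑F)^[n] (gval g) = gval g}
  one_mem' := by
    simp only [Set.mem_setOf_eq, gval_one]
    rw [iterate_map_zero]
  mul_mem' := by
    intro g h hg hh
    simp only [Set.mem_setOf_eq, gval_mul] at *
    rw [iterate_map_add, iterate_map_add, iterate_map_mul, hg, hh]
  inv_mem' := by
    intro g hg
    simp only [Set.mem_setOf_eq] at *
    have h1 : algGrpIter F n g = g := gval_injective (by rw [gval_algGrpIter]; exact hg)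
    have h2 : algGrpIter F n g⁻¹ = g⁻¹ := by rw [map_inv, h1]
    rw [← gval_algGrpIter, h2]

/-- The left product `g·a = (1+b)a = a + ba` of `a ∈ A` by `g = 1 + b ∈ G`. -/
def lact (g : AlgGrp A) (a : A) : A := a + gval g * a

/-- The right product `a·g = a(1+c) = a + ac` of `a ∈ A` by `g = 1 + c ∈ G`. -/
def ract (a : A) (g : AlgGrp A) : A := a + a * gval g

/-- The two-sided product `g·a·h` for `g, h ∈ G` and `a ∈ A`. -/
def bact (g : AlgGrp A) (a : A) (h : AlgGrp A) : A := ract (lact g a) h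

/-- The left centraliser `L(θ) = {g ∈ G | θ(g⁻¹a) = θ(a) for all a ∈ A}` of an additive
character `θ` of `A`. -/
def Lcent (θ : AddChar A ℂˣ) : Set (AlgGrp A) := {g | ∀ a : A, θ (lact g⁻¹ a) = θ a}

/-- The right centraliser `R(θ) = {g ∈ G | θ(ag⁻¹) = θ(a) for all a ∈ A}`. -/
def Rcent (θ : AddChar A ℂˣ) : Set (AlgGrp A) := {g | ∀ a : A, θ (ract a g⁻¹) = θ a}

/-- `𝓛(θ) = {b ∈ A | θ(bu) = 1 for all u ∈ A}`. -/
def Lsub (θ : AddChar A ℂˣ) : Set A := {b | ∀ u : A, θ (b * u) = 1}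

open Classical in
/-- `ν_θ°`, the extension of the linear character `ν_θ(g) = θ(g-1)` of `L(θ)` by zero. -/
noncomputable def nuz (θ : AddChar A ℂˣ) : AlgGrp A → ℂ :=
  fun g => if g ∈ Lcent θ then (θ (gval g) : ℂ) else 0

open Classical in
/-- `ν'_θ°`, the extension of the linear character `ν'_θ(g) = θ(g-1)` of `R(θ)` by zero. -/
noncomputable def nuzR (θ : AddChar A ℂˣ) : AlgGrp A → ℂ :=
  fun g => if g ∈ Rcent θ then (θ (gval g) : ℂ) else 0

/-- The supercharacter `ξ_θ = Ind_{L(θ)}^G ν_θ`. -/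
noncomputable def xi (θ : AddChar A ℂˣ) : AlgGrp A → ℂ :=
  fun g => (Nat.card (Lcent θ) : ℂ)⁻¹ * ∑ᶠ x : AlgGrp A, nuz θ (x * g * x⁻¹)

/-- `θ ∘ F`, the composition of an additive character with a ring automorphism. -/
def chF (F : A ≃+* A) (θ : AddChar A ℂˣ) : AddChar A ℂˣ :=
  θ.compAddMonoidHom F.toAddEquiv.toAddMonoidHom

@[simp] lemma chF_apply (F : A ≃+* A) (θ : AddChar A ℂˣ) (a : A) :
    chF F θ a = θ (F a) := rfl

/-- The two-sided orbit `G θ G` of an additive character `θ` of `A`. -/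
def Orb (θ : AddChar A ℂˣ) : Set (AddChar A ℂˣ) :=
  {θ' | ∃ g h : AlgGrp A, ∀ a : A, θ' a = θ (bact g a h)}

/-- The trace map `Tr_n(a) = a + F(a) + ⋯ + F^{n-1}(a)`. -/
def trMap (F : A ≃+* A) (n : ℕ) (a : A) : A := ∑ i ∈ Finset.range n, (⇑F)^[i] a

/-- Membership in the left centraliser `L(θ) ⊆ G(qⁿ)` of a character `θ ∈ Â(qⁿ)`:
`g ∈ G(qⁿ)` and `θ(g⁻¹a) = θ(a)` for all `a ∈ A(qⁿ)`. -/
def LcP (F : A ≃+* A) (n : ℕ) (θ : AddChar (fixedAdd F n) ℂˣ) (g : AlgGrp A) : Prop :=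
  ((⇑F)^[n] (gval g) = gval g) ∧
    ∀ (a w : fixedAdd F n), (w : A) = lact g⁻¹ (a : A) → θ w = θ a

open Classical in
/-- `ν_θ°` for `θ ∈ Â(qⁿ)`, the extension of `ν_θ` from `L(θ)` by zero. -/
noncomputable def nuzSub (F : A ≃+* A) (n : ℕ) (θ : AddChar (fixedAdd F n) ℂˣ) :
    AlgGrp A → ℂ :=
  fun g => if h : LcP F n θ g then (θ ⟨gval g, mem_fixedAdd.mpr h.1⟩ : ℂ) else 0

/-- The supercharacter `ξ_θ = Ind_{L(θ)}^{G(qⁿ)} ν_θ` of the finite group `G(qⁿ)`,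
for a character `θ ∈ Â(qⁿ)`. -/
noncomputable def xiSub (F : A ≃+* A) (n : ℕ) (θ : AddChar (fixedAdd F n) ℂˣ) :
    AlgGrp A → ℂ :=
  fun g => (Nat.card {x : AlgGrp A // LcP F n θ x} : ℂ)⁻¹ *
    ∑ᶠ x : (Gfix F n), nuzSub F n θ ((x : AlgGrp A) * g * (x : AlgGrp A)⁻¹)

/-- `ε(θ) : G → ℂ`, `ε(θ)(1+a) = θ(a)`. -/
noncomputable def epsC (θ : AddChar A ℂˣ) : AlgGrp A → ℂ := fun g => θ (gval g)

/-- The left-translation action of `G` on functions `G → ℂ`. -/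
def transl (g : AlgGrp A) (φ : AlgGrp A → ℂ) : AlgGrp A → ℂ := fun x => φ (g⁻¹ * x)

/-- The super `ℂ[G]`-module `V_θ`: the linear span of the `G`-orbit of `ε(θ)` inside
the `ℂ[G]`-module of all functions `G → ℂ` (with the left-translation action). -/
noncomputable def Vmod (θ : AddChar A ℂˣ) : Submodule ℂ (AlgGrp A → ℂ) :=
  Submodule.span ℂ (Set.range fun g : AlgGrp A => transl g (epsC θ))


-- ### new helper material
lemma wordProd_append_single (a b : A) (l : List A) :
    wordProd a (l ++ [b]) = wordProd a l * b := by
  induction l generalizing a with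
  | nil => rfl
  | cons c l ih => simpa [wordProd] using ih (a * c)

/-- Left-associated powers: `lpw a k = a^(k+1)`. -/
def lpw (a : A) : ℕ → A
  | 0 => a
  | k + 1 => lpw a k * a

lemma lpw_eq_wordProd (a : A) (k : ℕ) : lpw a k = wordProd a (List.replicate k a) := by
  induction k with
  | zero => rfl
  | succ k ih =>
      rw [List.replicate_succ', wordProd_append_single, ← ih]
      rfl

lemma mul_lpw (a : A) (k : ℕ) : a * lpw a k = lpw a (k + 1) := by
  induction k with
  | zero => rfl
  | succ k ih =>
      show a * (lpw a k * a) = lpw a (k + 1) * a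
      rw [← mul_assoc, ih]

/-- Right approximation sequence for the quasi-inverse. -/
def rseq (a : A) : ℕ → A
  | 0 => 0
  | k + 1 => -a - a * rseq a k

/-- Left approximation sequence for the quasi-inverse. -/
def lseq (a : A) : ℕ → A
  | 0 => 0
  | k + 1 => -a - lseq a k * a

lemma rseq_diff (a : A) (k : ℕ) :
    rseq a (k + 1) - rseq a k = lpw a k ∨ rseq a (k + 1) - rseq a k = -(lpw a k) := by
  induction k with
  | zero =>
      right
      show (-a - a * 0) - 0 = -(lpw a 0)
      rw [mul_zero, sub_zero, sub_zero]
      rfl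
  | succ k ih =>
      have h : rseq a (k + 2) - rseq a (k + 1)
          = -(a * (rseq a (k + 1) - rseq a k)) := by
        show (-a - a * rseq a (k+1)) - (-a - a * rseq a k) = _
        rw [mul_sub]
        abel
      rcases ih with h1 | h1
      · right
        rw [h, h1, mul_lpw]
      · left
        rw [h, h1, mul_neg, neg_neg, mul_lpw]

lemma lseq_diff (a : A) (k : ℕ) :
    lseq a (k + 1) - lseq a k = lpw a k ∨ lseq a (k + 1) - lseq a k = -(lpw a k) := by
  induction k with
  | zero =>
      right
      show (-a - 0 * a) - 0 = -(lpw a 0)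
      rw [zero_mul, sub_zero, sub_zero]
      rfl
  | succ k ih =>
      have h : lseq a (k + 2) - lseq a (k + 1)
          = -((lseq a (k + 1) - lseq a k) * a) := by
        show (-a - lseq a (k+1) * a) - (-a - lseq a k * a) = _
        rw [sub_mul]
        abel
      rcases ih with h1 | h1
      · right
        rw [h, h1]
        rfl
      · left
        rw [h, h1, neg_mul, neg_neg]
        rfl

/-- In a nilpotent ring every element is quasiregular. -/
lemma exists_gval (hnil : IsNilpotentRing A) (a : A) : ∃ g : AlgGrp A, gval g = a := by
  obtain ⟨N, hN0, hN⟩ := hnil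
  have hz : lpw a N = 0 := by
    rw [lpw_eq_wordProd]
    exact hN a _ (by simp)
  -- right quasi-inverse
  have hry : a + rseq a N + a * rseq a N = 0 := by
    have h0 : rseq a (N + 1) - rseq a N = 0 := by
      rcases rseq_diff a N with h | h <;> rw [h, hz] <;> simp
    have h4 : (-a - a * rseq a N) - rseq a N = 0 := h0
    calc a + rseq a N + a * rseq a N = -((-a - a * rseq a N) - rseq a N) := by abel
      _ = 0 := by rw [h4, neg_zero]
  have hly : a + lseq a N + lseq a N * a = 0 := by
    have h0 : lseq a (N + 1) - lseq a N = 0 := by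
      rcases lseq_diff a N with h | h <;> rw [h, hz] <;> simp
    have h4 : (-a - lseq a N * a) - lseq a N = 0 := h0
    calc a + lseq a N + lseq a N * a = -((-a - lseq a N * a) - lseq a N) := by abel
      _ = 0 := by rw [h4, neg_zero]
  -- build the unit
  have hr : (PreQuasiregular.mk a) * (PreQuasiregular.mk (rseq a N)) = 1 := by
    apply congrArg PreQuasiregular.mk (by
      show rseq a N + a + a * rseq a N = 0
      rw [← hry]; abel)
  have hl : (PreQuasiregular.mk (lseq a N)) * (PreQuasiregular.mk a) = 1 := by
    apply congrArg PreQuasiregular.mk (by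
      show a + lseq a N + lseq a N * a = 0
      exact hly)
  have heq : PreQuasiregular.mk (lseq a N) = PreQuasiregular.mk (rseq a N) := by
    calc PreQuasiregular.mk (lseq a N)
        = PreQuasiregular.mk (lseq a N) * 1 := (mul_one _).symm
      _ = PreQuasiregular.mk (lseq a N) * (PreQuasiregular.mk a * PreQuasiregular.mk (rseq a N)) := by rw [hr]
      _ = (PreQuasiregular.mk (lseq a N) * PreQuasiregular.mk a) * PreQuasiregular.mk (rseq a N) := by rw [mul_assoc]
      _ = PreQuasiregular.mk (rseq a N) := by rw [hl, one_mul]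
  exact ⟨⟨PreQuasiregular.mk a, PreQuasiregular.mk (rseq a N), hr, by rw [← heq]; exact hl⟩, rfl⟩

-- ### action lemmas
lemma lact_one (a : A) : lact (1 : AlgGrp A) a = a := by simp [lact]

lemma ract_one (a : A) : ract a (1 : AlgGrp A) = a := by simp [ract]

lemma lact_lact (g g' : AlgGrp A) (a : A) : lact g (lact g' a) = lact (g * g') a := by
  simp only [lact, gval_mul, add_mul, mul_add, mul_assoc]
  abel

lemma ract_ract (g g' : AlgGrp A) (a : A) : ract (ract a g) g' = ract a (g * g') := by
  simp only [ract, gval_mul, add_mul, mul_add, mul_assoc]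
  abel

lemma ract_lact (g h : AlgGrp A) (a : A) : ract (lact g a) h = lact g (ract a h) := by
  simp only [ract, lact, add_mul, mul_add, mul_assoc]
  abel

lemma bact_bact (g g' h h' : AlgGrp A) (a : A) :
    bact g (bact g' a h') h = bact (g * g') a (h' * h) := by
  simp only [bact, ← ract_lact, lact_lact, ract_ract]

lemma bact_one (a : A) : bact (1 : AlgGrp A) a 1 = a := by
  simp [bact, lact_one, ract_one]

lemma bact_cancel (g h : AlgGrp A) (a : A) :
    bact g⁻¹ (bact g a h⁻¹) h = a := by
  rw [bact_bact, inv_mul_cancel, inv_mul_cancel, bact_one]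


section AddLang

variable {k : Type*} [Field k]

/-- Auxiliary polynomial sequence for the additive Lang argument. -/
noncomputable def gpAux (Q : ℕ) (D : ℕ → k) : ℕ → Polynomial k
  | 0 => Polynomial.C (D 0) * Polynomial.X - 1
  | i + 1 => gpAux Q D i ^ Q + Polynomial.C (D (i + 1)) * Polynomial.X

variable [IsAlgClosed k]
variable {W : Type*} [AddCommGroup W] [Module k W] [Module.Finite k W]

/-- Additive Lang theorem: if `τ` is a `Q`-semilinear additive endomorphism of a
finite-dimensional vector space over an algebraically closed field and `Q ≥ 2`, then
`τ - id` is surjective. -/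
lemma addLang {Q : ℕ} (hQ : 2 ≤ Q) (τ : W →+ W)
    (hsemi : ∀ (c : k) (w : W), τ (c • w) = c ^ Q • τ w) (v : W) :
    ∃ b : W, τ b - b = v := by
  classical
  set d := Module.finrank k W with hd
  have hnl : ¬ LinearIndependent k (fun i : Fin (d + 1) => (⇑τ)^[(i : ℕ)] v) := by
    intro h
    have := h.fintype_card_le_finrank
    simp only [Fintype.card_fin] at this
    omega
  obtain ⟨g, hsum, i0, hi0⟩ := Fintype.not_linearIndependent_iff.mp hnl
  set G : ℕ → k := fun m => if h : m < d + 1 then g ⟨m, h⟩ else 0 with hG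
  have hsum' : ∑ m ∈ Finset.range (d + 1), G m • (⇑τ)^[m] v = 0 := by
    rw [← Fin.sum_univ_eq_sum_range (fun m => G m • (⇑τ)^[m] v) (d + 1), ← hsum]
    exact Finset.sum_congr rfl fun i _ => by simp [hG, i.isLt, Nat.lt_succ_iff.mp i.isLt, not_lt.mpr (Nat.lt_succ_iff.mp i.isLt)]
  have hGi0 : G (i0 : ℕ) ≠ 0 := by simpa [hG, i0.isLt, Nat.lt_succ_iff.mp i0.isLt] using hi0
  set jn := Nat.findGreatest (fun m => G m ≠ 0) d with hjn
  have hjn1 : G jn ≠ 0 :=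
    Nat.findGreatest_spec (P := fun m => G m ≠ 0) (Nat.lt_succ_iff.mp i0.isLt) hGi0
  have hjle : jn ≤ d := Nat.findGreatest_le (P := fun m => G m ≠ 0) d
  have hmax' : ∀ m, jn < m → G m = 0 := by
    intro m hm
    by_cases h : m ≤ d
    · by_contra h0
      exact Nat.findGreatest_is_greatest (P := fun m => G m ≠ 0) hm h h0
    · have hnm : ¬ m < d + 1 := by omega
      simp [hG, hnm, h]
  have hrel0 : ∑ m ∈ Finset.range (jn + 1), G m • (⇑τ)^[m] v = 0 := by
    rw [Finset.sum_subset (Finset.range_subset_range.mpr (by omega : jn + 1 ≤ d + 1))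
      (fun m _ hm => by
        rw [Finset.mem_range, not_lt] at hm
        rw [hmax' m (by omega), zero_smul])]
    exact hsum'
  set D : ℕ → k := fun m => -(G m / G jn) with hD
  have hrel : (⇑τ)^[jn] v = ∑ m ∈ Finset.range jn, D m • (⇑τ)^[m] v := by
    rw [Finset.sum_range_succ] at hrel0
    have h1 : G jn • (⇑τ)^[jn] v = -∑ m ∈ Finset.range jn, G m • (⇑τ)^[m] v := by
      rw [eq_neg_iff_add_eq_zero, add_comm]
      exact hrel0
    have h2 : (⇑τ)^[jn] v = (G jn)⁻¹ • (G jn • (⇑τ)^[jn] v) := by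
      rw [inv_smul_smul₀ hjn1]
    rw [h2, h1, ← Finset.sum_neg_distrib, Finset.smul_sum]
    refine Finset.sum_congr rfl fun m _ => ?_
    rw [smul_neg, ← neg_smul, smul_smul]
    congr 1
    simp [hD, div_eq_mul_inv, mul_comm]
  -- case split on jn
  rcases Nat.eq_zero_or_pos jn with hj0 | hjpos
  · refine ⟨0, ?_⟩
    rw [hj0] at hrel
    simp only [Function.iterate_zero, id_eq, Finset.range_zero, Finset.sum_empty] at hrel
    rw [map_zero, sub_zero, hrel]
  · obtain ⟨jj, hjj⟩ : ∃ jj, jn = jj + 1 := ⟨jn - 1, by omega⟩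
    rw [hjj] at hrel
    -- the polynomial whose root gives the solution
    have hQ0 : 0 < Q := by omega
    set Pt : Polynomial k := Polynomial.expand k Q (gpAux Q D jj) - Polynomial.X with hPt
    have hco : Pt.coeff 1 = -1 := by
      rw [hPt, Polynomial.coeff_sub, Polynomial.coeff_expand hQ0, Polynomial.coeff_X_one,
        if_neg (by rw [Nat.dvd_one]; omega : ¬ Q ∣ 1)]
      ring
    have hPtne : Pt ≠ 0 := fun h => by simp [h] at hco
    have hdeg : Pt.degree ≠ 0 := by
      intro h0
      have ha := Polynomial.degree_le_zero_iff.mp (le_of_eq h0)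
      rw [ha] at hco
      simp at hco
    obtain ⟨x, hx⟩ := IsAlgClosed.exists_root Pt hdeg
    have hxe : Polynomial.eval (x ^ Q) (gpAux Q D jj) = x := by
      have := hx
      rw [Polynomial.IsRoot, hPt, Polynomial.eval_sub, Polynomial.eval_X,
        sub_eq_zero, Polynomial.expand_eval] at this
      exact this
    set c : ℕ → k := fun i => Polynomial.eval (x ^ Q) (gpAux Q D i) with hc
    have hc0 : c 0 = D 0 * x ^ Q - 1 := by simp [hc, gpAux]
    have hcs : ∀ i, c (i + 1) = c i ^ Q + D (i + 1) * x ^ Q := by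
      intro i; simp [hc, gpAux]
    have hcj : c jj = x := hxe
    -- the key telescoping identity
    have key : ∀ m, τ (∑ i ∈ Finset.range (m + 1), c i • (⇑τ)^[i] v)
        - (∑ i ∈ Finset.range (m + 1), c i • (⇑τ)^[i] v)
        = v + (c m) ^ Q • (⇑τ)^[m + 1] v
          - x ^ Q • ∑ i ∈ Finset.range (m + 1), D i • (⇑τ)^[i] v := by
      intro m
      induction m with
      | zero =>
        simp only [zero_add, Finset.sum_range_one, Function.iterate_zero,
          Function.iterate_one, id_eq]
        rw [hsemi, hc0]
        module
      | succ m ih =>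
        rw [Finset.sum_range_succ (fun i => c i • (⇑τ)^[i] v) (m + 1), map_add, hsemi]
        have hit : τ ((⇑τ)^[m + 1] v) = (⇑τ)^[m + 1 + 1] v :=
          (Function.iterate_succ_apply' (⇑τ) (m + 1) v).symm
        rw [hit]
        rw [Finset.sum_range_succ (fun i => D i • (⇑τ)^[i] v) (m + 1)]
        have hrec := hcs m
        -- rearrange using ih
        have : τ (∑ i ∈ Finset.range (m + 1), c i • (⇑τ)^[i] v)
            = (∑ i ∈ Finset.range (m + 1), c i • (⇑τ)^[i] v)
              + (v + (c m) ^ Q • (⇑τ)^[m + 1] v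
                - x ^ Q • ∑ i ∈ Finset.range (m + 1), D i • (⇑τ)^[i] v) := by
          rw [← ih]; abel
        rw [this, hrec]
        module
    have := key jj
    rw [hcj, ← hrel] at this
    exact ⟨∑ i ∈ Finset.range (jj + 1), c i • (⇑τ)^[i] v, by rw [this]; module⟩

end AddLang

section OverClosure

/- Context: `p` a prime, `q` a power of `p`, `k` the algebraic closure of `𝔽_q`
(an algebraically closed field of characteristic `p` that is a union of finite fields),
`A = A₀ ⊗_{𝔽_q} k` a finite-dimensional nilpotent associative `k`-algebra, `G = 1 + A` the
corresponding algebra group, and `F : A → A` the Frobenius: a `q`-semilinear ring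
automorphism.  `A(qⁿ)` and `G(qⁿ)` are the fixed points `fixedAdd F n` and `Gfix F n`
of `Fⁿ` in `A` and `G`. -/
variable {p q n : ℕ} [Fact p.Prime]
variable {k : Type*} [Field k] [IsAlgClosed k] [CharP k p]
variable {A : Type*} [NonUnitalRing A] [Module k A] [IsScalarTower k A A]
  [SMulCommClass k A A] [Module.Finite k A]


/-- Equivalence between the additive and the group form of the two-sided
stabilizer condition. -/
lemma P_iff_grp (f : A →ₗ[k] k) (g h : AlgGrp A) :
    (∀ a, f (gval g * a) = f (a * gval h)) ↔ (∀ a, f (bact g⁻¹ a h) = f a) := by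
  constructor
  · intro hP a
    have ha : lact g (lact g⁻¹ a) = a := by rw [lact_lact, mul_inv_cancel, lact_one]
    have h1 : bact g⁻¹ a h = lact g⁻¹ a + (lact g⁻¹ a) * gval h := rfl
    calc f (bact g⁻¹ a h) = f (lact g⁻¹ a) + f ((lact g⁻¹ a) * gval h) := by
          rw [h1, map_add]
      _ = f (lact g⁻¹ a) + f (gval g * lact g⁻¹ a) := by rw [← hP (lact g⁻¹ a)]
      _ = f (lact g⁻¹ a + gval g * lact g⁻¹ a) := (map_add f _ _).symm
      _ = f (lact g (lact g⁻¹ a)) := rfl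
      _ = f a := by rw [ha]
  · intro hg a
    have h0 := hg (lact g a)
    have h1 : bact g⁻¹ (lact g a) h = ract a h := by
      show ract (lact g⁻¹ (lact g a)) h = ract a h
      rw [lact_lact, inv_mul_cancel, lact_one]
    rw [h1] at h0
    have h2 : f a + f (a * gval h) = f a + f (gval g * a) := by
      simpa [ract, lact, map_add] using h0
    exact (add_left_cancel h2).symm

/-- Lang's theorem for the two-sided stabilizer of an `Fⁿ`-rational linear form on a
finite-dimensional nilpotent algebra over the algebraic closure. -/
lemma langMain (hq2 : 2 ≤ q ^ n) (hnil : IsNilpotentRing A)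
    (F : A ≃+* A) (hFsemi : ∀ (c : k) (a : A), F (c • a) = c ^ q • F a)
    (f : A →ₗ[k] k) (hf : ∀ a : A, f ((⇑F)^[n] a) = f a ^ q ^ n)
    (u v : AlgGrp A) (huv : ∀ a, f (bact u⁻¹ a v) = f a) :
    ∃ s t : AlgGrp A, (∀ a, f (bact s⁻¹ a t) = f a) ∧
      algGrpIter F n s = u⁻¹ * s ∧ algGrpIter F n t = v⁻¹ * t := by
  classical
  have hσsmul : ∀ (m : ℕ) (c : k) (a : A),
      (⇑F)^[m] (c • a) = c ^ q ^ m • (⇑F)^[m] a := by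
    intro m
    induction m with
    | zero => intro c a; simp
    | succ m ih =>
        intro c a
        rw [Function.iterate_succ_apply', ih, hFsemi,
          Function.iterate_succ_apply', ← pow_mul, pow_succ]
  have hσ'σ : ∀ a : A, (⇑F)^[n] ((⇑F.symm)^[n] a) = a := fun a =>
    (Function.LeftInverse.iterate F.apply_symm_apply n) a
  -- the two-sided stabilizer as a submodule of `A × A`
  let S : Submodule k (A × A) :=
    { carrier := {z | ∀ a, f (z.1 * a) = f (a * z.2)}
      add_mem' := by
        intro z w hz hw a
        simp only [Set.mem_setOf_eq, Prod.fst_add, Prod.snd_add] at *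
        rw [add_mul, mul_add, map_add, map_add, hz, hw]
      zero_mem' := by intro a; simp
      smul_mem' := by
        intro r z hz a
        simp only [Set.mem_setOf_eq, Prod.smul_fst, Prod.smul_snd] at *
        rw [smul_mul_assoc, mul_smul_comm, map_smul, map_smul, hz a] }
  have hSmem : ∀ z : A × A, z ∈ S ↔ ∀ a, f (z.1 * a) = f (a * z.2) := fun z => Iff.rfl
  have hSσ : ∀ z : A × A, z ∈ S → ((⇑F)^[n] z.1, (⇑F)^[n] z.2) ∈ S := by
    intro z hz
    rw [hSmem] at *
    intro a
    calc f ((⇑F)^[n] z.1 * a)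
        = f ((⇑F)^[n] z.1 * (⇑F)^[n] ((⇑F.symm)^[n] a)) := by rw [hσ'σ]
      _ = f ((⇑F)^[n] (z.1 * (⇑F.symm)^[n] a)) := by rw [iterate_map_mul]
      _ = f (z.1 * (⇑F.symm)^[n] a) ^ q ^ n := hf _
      _ = f (((⇑F.symm)^[n] a) * z.2) ^ q ^ n := by rw [hz]
      _ = f ((⇑F)^[n] (((⇑F.symm)^[n] a) * z.2)) := (hf _).symm
      _ = f ((⇑F)^[n] ((⇑F.symm)^[n] a) * (⇑F)^[n] z.2) := by rw [iterate_map_mul]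
      _ = f (a * (⇑F)^[n] z.2) := by rw [hσ'σ]
  have hSmul : ∀ z w : A × A, z ∈ S → w ∈ S → (z.1 * w.1, z.2 * w.2) ∈ S := by
    intro z w hz hw
    rw [hSmem] at *
    intro a
    calc f (z.1 * w.1 * a) = f (z.1 * (w.1 * a)) := by rw [mul_assoc]
      _ = f ((w.1 * a) * z.2) := hz _
      _ = f (w.1 * (a * z.2)) := by rw [mul_assoc]
      _ = f ((a * z.2) * w.2) := hw _
      _ = f (a * (z.2 * w.2)) := by rw [mul_assoc]
  have hB : (gval u, gval v) ∈ S := (P_iff_grp f u v).mpr huv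
  -- the twisted semilinear endomorphism of `S`
  have hmemτ : ∀ z : ↥S,
      ((⇑F)^[n] z.val.1 + gval u * (⇑F)^[n] z.val.1,
        (⇑F)^[n] z.val.2 + gval v * (⇑F)^[n] z.val.2) ∈ S := by
    intro z
    have h1 := hSσ z.val z.2
    have h2 := hSmul (gval u, gval v) ((⇑F)^[n] z.val.1, (⇑F)^[n] z.val.2) hB h1
    exact S.add_mem h1 h2
  set τ : ↥S →+ ↥S := AddMonoidHom.mk'
    (fun z => ⟨((⇑F)^[n] z.val.1 + gval u * (⇑F)^[n] z.val.1,
        (⇑F)^[n] z.val.2 + gval v * (⇑F)^[n] z.val.2), hmemτ z⟩)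
    (by
      intro z w
      apply Subtype.ext
      apply Prod.ext <;>
        simp only [Submodule.coe_add, Prod.fst_add, Prod.snd_add] <;>
        rw [iterate_map_add, mul_add] <;> abel) with hτ
  have hsemiτ : ∀ (c : k) (z : ↥S), τ (c • z) = c ^ q ^ n • τ z := by
    intro c z
    apply Subtype.ext
    apply Prod.ext <;>
      simp only [hτ, AddMonoidHom.mk'_apply, SetLike.val_smul, Prod.smul_fst, Prod.smul_snd,
        Prod.smul_mk] <;>
      rw [hσsmul n, mul_smul_comm, smul_add]
  obtain ⟨ζ, hζ⟩ := addLang hq2 τ hsemiτ (-⟨(gval u, gval v), hB⟩)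
  have hval : (τ ζ).val - ζ.val = -(gval u, gval v) := by
    have := congrArg Subtype.val hζ
    rwa [Submodule.coe_sub, Submodule.coe_neg] at this
  have hx1 : (⇑F)^[n] ζ.val.1 + gval u * (⇑F)^[n] ζ.val.1 - ζ.val.1 = -(gval u) := by
    have := congrArg Prod.fst hval
    simpa [hτ] using this
  have hx2 : (⇑F)^[n] ζ.val.2 + gval v * (⇑F)^[n] ζ.val.2 - ζ.val.2 = -(gval v) := by
    have := congrArg Prod.snd hval
    simpa [hτ] using this
  obtain ⟨s, hs⟩ := exists_gval hnil ζ.val.1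
  obtain ⟨t, ht⟩ := exists_gval hnil ζ.val.2
  have hus : u * algGrpIter F n s = s := by
    apply gval_injective
    rw [gval_mul, gval_algGrpIter, hs]
    calc (⇑F)^[n] ζ.val.1 + gval u + gval u * (⇑F)^[n] ζ.val.1
        = ((⇑F)^[n] ζ.val.1 + gval u * (⇑F)^[n] ζ.val.1 - ζ.val.1) + ζ.val.1 + gval u := by
          abel
      _ = -(gval u) + ζ.val.1 + gval u := by rw [hx1]
      _ = ζ.val.1 := by abel
  have hvt : v * algGrpIter F n t = t := by
    apply gval_injective
    rw [gval_mul, gval_algGrpIter, ht]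
    calc (⇑F)^[n] ζ.val.2 + gval v + gval v * (⇑F)^[n] ζ.val.2
        = ((⇑F)^[n] ζ.val.2 + gval v * (⇑F)^[n] ζ.val.2 - ζ.val.2) + ζ.val.2 + gval v := by
          abel
      _ = -(gval v) + ζ.val.2 + gval v := by rw [hx2]
      _ = ζ.val.2 := by abel
  have hstP : ∀ a, f (gval s * a) = f (a * gval t) := by
    rw [hs, ht]
    exact ζ.2
  exact ⟨s, t, (P_iff_grp f s t).mp hstP,
    eq_inv_mul_iff_mul_eq.mpr hus, eq_inv_mul_iff_mul_eq.mpr hvt⟩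


/-- Let `f, f' ∈ A* = Hom_k(A, k)` both satisfy the `Fⁿ`-rationality
condition `f(Fⁿ(a)) = f(a)^{qⁿ}`.  If `f'(a) = f(x⁻¹ a y)` for all `a ∈ A` for some
`x, y ∈ G`, then there exist `x₀, y₀ ∈ G(qⁿ)` with `f'(a) = f(x₀⁻¹ a y₀)` for all
`a ∈ A`: the `Fⁿ`-rational points of a `(G × G)`-orbit in `A*` form a single
`(G(qⁿ) × G(qⁿ))`-orbit. -/
theorem statement5
    (hq : ∃ s : ℕ, 0 < s ∧ q = p ^ s) (hn : 0 < n)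
    (halg : ∀ x : k, ∃ m : ℕ, 0 < m ∧ x ^ p ^ m = x)
    (hnil : IsNilpotentRing A)
    (F : A ≃+* A) (hFsemi : ∀ (c : k) (a : A), F (c • a) = c ^ q • F a)
    (f f' : A →ₗ[k] k)
    (hf : ∀ a : A, f ((⇑F)^[n] a) = f a ^ q ^ n)
    (hf' : ∀ a : A, f' ((⇑F)^[n] a) = f' a ^ q ^ n)
    (x y : AlgGrp A) (horb : ∀ a : A, f' a = f (bact x⁻¹ a y)) :
    ∃ x₀ y₀ : AlgGrp A, x₀ ∈ Gfix F n ∧ y₀ ∈ Gfix F n ∧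
      ∀ a : A, f' a = f (bact x₀⁻¹ a y₀) := by
  classical
  have hq2 : 2 ≤ q ^ n := by
    obtain ⟨s, hs0, rfl⟩ := hq
    have hp2 : 2 ≤ p := (Fact.out : p.Prime).two_le
    calc 2 ≤ p := hp2
      _ ≤ p ^ s := Nat.le_self_pow (by omega) p
      _ ≤ (p ^ s) ^ n := Nat.le_self_pow (by omega) _
  have hσbact : ∀ (g h : AlgGrp A) (a : A), (⇑F)^[n] (bact g a h) =
      bact (algGrpIter F n g) ((⇑F)^[n] a) (algGrpIter F n h) := by
    intro g h a
    simp only [bact, ract, lact, iterate_map_add, iterate_map_mul, gval_algGrpIter]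
  have hσ'σ : ∀ a : A, (⇑F)^[n] ((⇑F.symm)^[n] a) = a := fun a =>
    (Function.LeftInverse.iterate F.apply_symm_apply n) a
  have hdag : ∀ b, f (bact (algGrpIter F n x)⁻¹ b (algGrpIter F n y))
      = f (bact x⁻¹ b y) := by
    intro b
    have hb := hσ'σ b
    conv_lhs => rw [← hb]
    conv_rhs => rw [← hb]
    calc f (bact (algGrpIter F n x)⁻¹ ((⇑F)^[n] ((⇑F.symm)^[n] b)) (algGrpIter F n y))
        = f ((⇑F)^[n] (bact x⁻¹ ((⇑F.symm)^[n] b) y)) := by rw [← map_inv, ← hσbact]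
      _ = f (bact x⁻¹ ((⇑F.symm)^[n] b) y) ^ q ^ n := hf _
      _ = f' ((⇑F.symm)^[n] b) ^ q ^ n := by rw [← horb]
      _ = f' ((⇑F)^[n] ((⇑F.symm)^[n] b)) := (hf' _).symm
      _ = f (bact x⁻¹ ((⇑F)^[n] ((⇑F.symm)^[n] b)) y) := horb _
  have huv : ∀ a, f (bact (x⁻¹ * algGrpIter F n x)⁻¹ a (y⁻¹ * algGrpIter F n y)) = f a := by
    intro a
    have h1 : bact (x⁻¹ * algGrpIter F n x)⁻¹ a (y⁻¹ * algGrpIter F n y)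
        = bact (algGrpIter F n x)⁻¹ (bact x a y⁻¹) (algGrpIter F n y) := by
      rw [bact_bact, mul_inv_rev, inv_inv]
    rw [h1, hdag, bact_cancel]
  obtain ⟨s, t, hst, hFgs, hFgt⟩ := langMain hq2 hnil F hFsemi f hf _ _ huv
  have hxs : algGrpIter F n (x * s) = x * s := by
    rw [map_mul, hFgs]
    group
  have hyt : algGrpIter F n (y * t) = y * t := by
    rw [map_mul, hFgt]
    group
  refine ⟨x * s, y * t, ?_, ?_, ?_⟩
  · show (⇑F)^[n] (gval (x * s)) = gval (x * s)
    rw [← gval_algGrpIter, hxs]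
  · show (⇑F)^[n] (gval (y * t)) = gval (y * t)
    rw [← gval_algGrpIter, hyt]
  · intro a
    rw [horb a]
    have h1 : bact (x * s)⁻¹ a (y * t) = bact s⁻¹ (bact x⁻¹ a y) t := by
      rw [bact_bact, mul_inv_rev]
    rw [h1, hst]


end OverClosure

end Shintani
end

section
/- Let τ ∈ Â(q) and set θ = τ∘Tr_n ∈ Â(qⁿ). Then the left centraliser of τ in G(q) equals the intersection of the left centraliser of θ in G(qⁿ) with G(q): L(τ) = L(θ) ∩ G(q), where L(τ) = {g ∈ G(q) : τ(g⁻¹a) = τ(a) for all a ∈ A(q)} and L(θ) = {g ∈ G(qⁿ) : θ(g⁻¹a) = θ(a) for all a ∈ A(qⁿ)}. -/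
open scoped BigOperators

namespace Shintani

variable {A : Type*} [NonUnitalRing A]

section FiniteLevel

/- Context: `q` a prime power, `K = 𝔽_{qⁿ}` a finite field with `qⁿ` elements, `A` a
finite-dimensional nilpotent associative `K`-algebra (`A = A(qⁿ) = A₀ ⊗_{𝔽_q} 𝔽_{qⁿ}`), with
algebra group `G(qⁿ) = 1 + A`, and `F : A → A` the Frobenius map: a `q`-semilinear ring
automorphism with `Fⁿ = id`.  The subalgebra `A(q)` is the set `fixedAdd F 1` of fixed
points of `F`, and `G(q) = 1 + A(q)` consists of those `g` with `F(g-1) = g-1`. -/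
variable {q n : ℕ} {K : Type*} [Field K] [Fintype K]
variable {A : Type*} [NonUnitalRing A] [Module K A] [IsScalarTower K A A]
  [SMulCommClass K A A] [Fintype A]


lemma sum_shift_eq {M : Type*} [AddCommGroup M] (f : ℕ → M) (n : ℕ) (h : f n = f 0) :
    ∑ i ∈ Finset.range n, f (i + 1) = ∑ i ∈ Finset.range n, f i := by
  have h1 := Finset.sum_range_succ' f n
  have h2 := Finset.sum_range_succ f n
  rw [h2, h] at h1
  exact add_right_cancel h1.symm

open Finset Polynomial in
lemma exists_sum_pow_eq_one {K : Type*} [Field K] [Fintype K] {q n : ℕ}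
    (hq : IsPrimePow q) (hn : 0 < n) (hK : Fintype.card K = q ^ n) :
    ∃ c : K, ∑ i ∈ Finset.range n, c ^ q ^ i = 1 := by
  classical
  obtain ⟨p, k, hp, hk, rfl⟩ := hq
  rw [← Nat.prime_iff] at hp
  haveI : Fact p.Prime := ⟨hp⟩
  have hq2 : 2 ≤ p ^ k := Nat.one_lt_pow hk.ne' hp.one_lt
  have hqpos : 0 < p ^ k := by positivity
  -- char of K is p
  have hcast : ((p : K)) = 0 := by
    have h0 := FiniteField.cast_card_eq_zero K
    rw [hK, ← pow_mul] at h0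
    push_cast at h0
    exact pow_eq_zero_iff (by positivity : 0 < k * n).ne' |>.mp h0
  haveI : CharP K p := by
    rcases hp.eq_one_or_self_of_dvd (ringChar K) (ringChar.dvd hcast) with h | h
    · exact absurd h (CharP.ringChar_ne_one)
    · exact h ▸ ringChar.charP K
  -- the additive trace map T
  let T : K →+ K :=
    { toFun := fun x => ∑ i ∈ Finset.range n, x ^ (p ^ k) ^ i
      map_zero' := by
        show (∑ i ∈ Finset.range n, (0 : K) ^ (p ^ k) ^ i) = 0
        exact Finset.sum_eq_zero fun i _ => zero_pow (pow_pos hqpos _).ne'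
      map_add' := by
        intro x y
        show (∑ i ∈ Finset.range n, (x + y) ^ (p ^ k) ^ i)
            = (∑ i ∈ Finset.range n, x ^ (p ^ k) ^ i) + ∑ i ∈ Finset.range n, y ^ (p ^ k) ^ i
        rw [← Finset.sum_add_distrib]
        refine Finset.sum_congr rfl fun i _ => ?_
        rw [show (p ^ k) ^ i = p ^ (k * i) from (pow_mul p k i).symm]
        exact add_pow_char_pow x y p (k * i) }
  have hTval : ∀ x : K, T x = ∑ i ∈ Finset.range n, x ^ (p ^ k) ^ i := fun _ => rfl
  -- T x is fixed by the q-power map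
  have hfix : ∀ x : K, (T x) ^ (p ^ k) = T x := by
    intro x
    rw [hTval, sum_pow_char_pow]
    have he : ∀ i ∈ Finset.range n, (x ^ (p ^ k) ^ i) ^ p ^ k = x ^ (p ^ k) ^ (i + 1) := by
      intro i _
      rw [← pow_mul, ← pow_succ]
    rw [Finset.sum_congr rfl he]
    exact sum_shift_eq (fun i => x ^ (p ^ k) ^ i) n (by
      show x ^ (p ^ k) ^ n = x ^ (p ^ k) ^ 0
      rw [pow_zero, pow_one, ← hK, FiniteField.pow_card])
  -- the fixed-point finset S and the image finset R
  set S : Finset K := Finset.univ.filter (fun y => y ^ (p ^ k) = y) with hS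
  set R : Finset K := (T.range : Set K).toFinset with hR
  have hRS : R ⊆ S := by
    intro y hy
    rw [hR, Set.mem_toFinset] at hy
    obtain ⟨x, hx⟩ := hy
    rw [hS, Finset.mem_filter]
    exact ⟨Finset.mem_univ _, hx ▸ hfix x⟩
  -- card S ≤ p ^ k
  have hScard : S.card ≤ p ^ k := by
    set Q : K[X] := X ^ (p ^ k) - X with hQ
    have hmon : Q.Monic := monic_X_pow_sub (by
      rw [degree_X]; exact_mod_cast hq2)
    have hQne : Q ≠ 0 := hmon.ne_zero
    have hdeg : Q.natDegree = p ^ k := by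
      rw [hQ, natDegree_sub_eq_left_of_natDegree_lt, natDegree_X_pow]
      rw [natDegree_X, natDegree_X_pow]; exact lt_of_lt_of_le one_lt_two hq2
    have hsub : S ⊆ Q.roots.toFinset := by
      intro y hy
      rw [hS, Finset.mem_filter] at hy
      rw [Multiset.mem_toFinset, mem_roots hQne]
      simp [hQ, IsRoot, sub_eq_zero, hy.2]
    calc S.card ≤ Q.roots.toFinset.card := Finset.card_le_card hsub
      _ ≤ Multiset.card Q.roots := Q.roots.toFinset_card_le
      _ ≤ Q.natDegree := Q.card_roots'
      _ = p ^ k := hdeg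
  -- card (ker T) ≤ (p^k)^(n-1)
  have hkcard : Nat.card T.ker ≤ (p ^ k) ^ (n - 1) := by
    set P : K[X] := ∑ i ∈ Finset.range n, X ^ (p ^ k) ^ i with hP
    have hPc : P.coeff ((p ^ k) ^ (n - 1)) = 1 := by
      rw [hP, finset_sum_coeff]
      have he : ∀ i ∈ Finset.range n,
          (X ^ (p ^ k) ^ i : K[X]).coeff ((p ^ k) ^ (n - 1))
            = if i = n - 1 then 1 else 0 := by
        intro i _
        rw [coeff_X_pow]
        by_cases h : i = n - 1
        · simp [h]
        · rw [if_neg h, if_neg fun hh => h (Nat.pow_right_injective hq2 hh).symm]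
      rw [Finset.sum_congr rfl he, Finset.sum_ite_eq' (Finset.range n) (n - 1)]
      simp [Nat.sub_lt hn Nat.one_pos]
    have hPne : P ≠ 0 := fun h => by simp [h] at hPc
    have hPdeg : P.natDegree ≤ (p ^ k) ^ (n - 1) := by
      refine natDegree_sum_le_of_forall_le _ _ fun i hi => ?_
      rw [natDegree_X_pow]
      exact Nat.pow_le_pow_right hqpos (by
        have := Finset.mem_range.mp hi; omega)
    have hsub : (T.ker : Set K).toFinset ⊆ P.roots.toFinset := by
      intro y hy
      rw [Set.mem_toFinset, SetLike.mem_coe, AddMonoidHom.mem_ker] at hy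
      rw [Multiset.mem_toFinset, mem_roots hPne]
      have : P.eval y = T y := by
        rw [hP, hTval, eval_finset_sum]
        simp
      simp [IsRoot, this, hy]
    calc Nat.card T.ker = (T.ker : Set K).toFinset.card := by
          rw [← Set.ncard_eq_toFinset_card', ← Nat.card_coe_set_eq]; rfl
      _ ≤ P.roots.toFinset.card := Finset.card_le_card hsub
      _ ≤ Multiset.card P.roots := P.roots.toFinset_card_le
      _ ≤ P.natDegree := P.card_roots'
      _ ≤ (p ^ k) ^ (n - 1) := hPdeg
  -- card (range T) ≥ p ^ k
  have hquot : Nat.card K = Nat.card T.range * Nat.card T.ker := by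
    rw [AddSubgroup.card_eq_card_quotient_mul_card_addSubgroup T.ker]
    congr 1
    exact Nat.card_congr (QuotientAddGroup.quotientKerEquivRange T).toEquiv
  have hRcard : p ^ k ≤ R.card := by
    have hRc : R.card = Nat.card T.range := by
      rw [hR, ← Set.ncard_eq_toFinset_card', ← Nat.card_coe_set_eq]; rfl
    have hKc : Nat.card K = (p ^ k) ^ n := by rw [Nat.card_eq_fintype_card, hK]
    have h1 : (p ^ k) ^ (n - 1) * (p ^ k) ≤ Nat.card T.range * (p ^ k) ^ (n - 1) := by
      rw [← pow_succ, show n - 1 + 1 = n by omega, ← hKc, hquot]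
      exact Nat.mul_le_mul_left _ hkcard
    rw [hRc]
    have hkpos : 0 < (p ^ k) ^ (n - 1) := by positivity
    rw [mul_comm ((p ^ k) ^ (n - 1))] at h1
    exact Nat.le_of_mul_le_mul_right h1 hkpos
  -- conclude
  have hRSeq : R = S := Finset.eq_of_subset_of_card_le hRS (hScard.trans hRcard)
  have hone : (1 : K) ∈ S := by rw [hS, Finset.mem_filter]; exact ⟨Finset.mem_univ _, one_pow _⟩
  rw [← hRSeq, hR, Set.mem_toFinset] at hone
  obtain ⟨c, hc⟩ := hone
  exact ⟨c, hc⟩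

lemma gval_inv_fixed (F : A ≃+* A) (g : AlgGrp A) (hg : F (gval g) = gval g) :
    F (gval g⁻¹) = gval g⁻¹ := by
  have h1 : algGrpMap F g = g := gval_injective (by rw [gval_algGrpMap, hg])
  have h2 : algGrpMap F g⁻¹ = g⁻¹ := by rw [map_inv, h1]
  calc F (gval g⁻¹) = gval (algGrpMap F g⁻¹) := rfl
    _ = gval g⁻¹ := by rw [h2]

lemma trMap_F_fixed (F : A ≃+* A) (n : ℕ) (hFn : ∀ a : A, (⇑F)^[n] a = a) (x : A) :
    F (trMap F n x) = trMap F n x := by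
  unfold trMap
  rw [map_sum]
  have he : ∀ i ∈ Finset.range n, F ((⇑F)^[i] x) = (fun j => (⇑F)^[j] x) (i + 1) :=
    fun i _ => (Function.iterate_succ_apply' F i x).symm
  rw [Finset.sum_congr rfl he]
  exact sum_shift_eq (fun i => (⇑F)^[i] x) n (by
    show (⇑F)^[n] x = (⇑F)^[0] x
    rw [hFn]; rfl)

lemma trMap_lact (F : A ≃+* A) (n : ℕ) (g : AlgGrp A) (hg : F (gval g) = gval g) (a : A) :
    trMap F n (lact g a) = lact g (trMap F n a) := by
  unfold trMap lact
  simp only [iterate_map_add, iterate_map_mul, Function.iterate_fixed hg]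
  rw [Finset.sum_add_distrib, Finset.mul_sum]

/-- Let `τ ∈ Â(q)` and `θ = τ∘Tr_n ∈ Â(qⁿ)`.  Then
`L(τ) = L(θ) ∩ G(q)`: for `g ∈ G(qⁿ)`, one has `g ∈ G(q)` and `τ(g⁻¹a) = τ(a)` for all
`a ∈ A(q)` if and only if `g ∈ L(θ)` and `g ∈ G(q)`. -/
theorem statement6
    (hq : IsPrimePow q) (hn : 0 < n) (hK : Fintype.card K = q ^ n)
    (hnil : IsNilpotentRing A)
    (F : A ≃+* A) (hFsemi : ∀ (c : K) (a : A), F (c • a) = c ^ q • F a)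
    (hFn : ∀ a : A, (⇑F)^[n] a = a)
    (τ : AddChar (fixedAdd F 1) ℂˣ) (θ : AddChar A ℂˣ)
    (hθ : ∀ (a : A) (b : fixedAdd F 1), (b : A) = trMap F n a → θ a = τ b)
    (g : AlgGrp A) :
    (F (gval g) = gval g ∧
        ∀ (a b : fixedAdd F 1), (b : A) = lact g⁻¹ (a : A) → τ b = τ a) ↔
      (g ∈ Lcent θ ∧ F (gval g) = gval g) := by
  have hFn1 : ∀ x : A, F (trMap F n x) = trMap F n x := trMap_F_fixed F n hFn
  have hmem : ∀ x : A, trMap F n x ∈ fixedAdd F 1 := fun x => by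
    rw [mem_fixedAdd, Function.iterate_one]; exact hFn1 x
  constructor
  · rintro ⟨hFg, hτ⟩
    refine ⟨?_, hFg⟩
    intro a
    have hginv : F (gval g⁻¹) = gval g⁻¹ := gval_inv_fixed F g hFg
    have hcomm := trMap_lact F n g⁻¹ hginv a
    have h1 := hθ (lact g⁻¹ a) ⟨trMap F n (lact g⁻¹ a), hmem _⟩ rfl
    have h2 := hθ a ⟨trMap F n a, hmem _⟩ rfl
    have h3 := hτ ⟨trMap F n a, hmem _⟩ ⟨trMap F n (lact g⁻¹ a), hmem _⟩ hcomm
    rw [h1, h2]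
    exact h3
  · rintro ⟨hL, hFg⟩
    refine ⟨hFg, ?_⟩
    intro a b hb
    obtain ⟨c, hc⟩ := exists_sum_pow_eq_one hq hn hK
    have ha1 : F (a : A) = (a : A) := by
      have h := a.2
      rwa [mem_fixedAdd, Function.iterate_one] at h
    have hiter : ∀ i : ℕ, (⇑F)^[i] (c • (a : A)) = c ^ q ^ i • (a : A) := by
      intro i
      induction i with
      | zero => simp
      | succ i ih =>
          rw [Function.iterate_succ_apply', ih, hFsemi, ha1, ← pow_mul, ← pow_succ]
    have htr : trMap F n (c • (a : A)) = (a : A) := by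
      unfold trMap
      rw [Finset.sum_congr rfl (fun i _ => hiter i), ← Finset.sum_smul, hc, one_smul]
    have hginv : F (gval g⁻¹) = gval g⁻¹ := gval_inv_fixed F g hFg
    have hcomm : trMap F n (lact g⁻¹ (c • (a : A))) = (b : A) := by
      rw [trMap_lact F n g⁻¹ hginv, htr, ← hb]
    have h1 := hθ (c • (a : A)) a htr.symm
    have h2 := hθ (lact g⁻¹ (c • (a : A))) b hcomm.symm
    have h3 := hL (c • (a : A))
    rw [← h2, h3, h1]


end FiniteLevel

end Shintani
end

section
/- Let τ ∈ Â(q) and θ = τ∘Tr_n ∈ Â(qⁿ). Let 𝓛_G(θ) ⊆ A be the k-linear span of 𝓛(θ) = {a ∈ A(qⁿ) : θ(au) = 1 for all u ∈ A(qⁿ)} and set L_G(θ) = 1 + 𝓛_G(θ) ⊆ G. If g ∈ L(θ) (the left centraliser of θ in G(qⁿ)) and h ∈ L_G(θ) satisfy g = h⁻¹F(h), then Fⁿ(h)h⁻¹ belongs to L(τ) = {x ∈ G(q) : τ(x⁻¹a) = τ(a) for all a ∈ A(q)} and ν_τ(Fⁿ(h)h⁻¹) = ν_θ(g), i.e. τ(Fⁿ(h)h⁻¹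 − 1) = θ(g − 1). (This says that the Shintani descent of ν_θ from L(θ) to L(τ) is ν_τ.) -/
open scoped BigOperators

namespace Shintani

variable {A : Type*} [NonUnitalRing A]

section OverClosure

/- Context: `p` a prime, `q` a power of `p`, `k` the algebraic closure of `𝔽_q`
(an algebraically closed field of characteristic `p` that is a union of finite fields),
`A = A₀ ⊗_{𝔽_q} k` a finite-dimensional nilpotent associative `k`-algebra, `G = 1 + A` the
corresponding algebra group, and `F : A → A` the Frobenius: a `q`-semilinear ring
automorphism.  `A(qⁿ)` and `G(qⁿ)` are the fixed points `fixedAdd F n` and `Gfix F n`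
of `Fⁿ` in `A` and `G`. -/
variable {p q n : ℕ} [Fact p.Prime]
variable {k : Type*} [Field k] [IsAlgClosed k] [CharP k p]
variable {A : Type*} [NonUnitalRing A] [Module k A] [IsScalarTower k A A]
  [SMulCommClass k A A] [Module.Finite k A]

/-! ### Auxiliary lemmas -/
set_option linter.unusedSectionVars false

lemma wordProd_append_singleton (a c : A) (l : List A) :
    wordProd a (l ++ [c]) = wordProd a l * c := by
  induction l generalizing a with
  | nil => rfl
  | cons b l ih => exact ih (a * b)

/-- If `M` is a multiplicatively closed submodule and `gval u ∈ M`, then `gval u⁻¹ ∈ M`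
(using nilpotency of `A`). -/
lemma gval_inv_mem (hnil : IsNilpotentRing A) (M : Submodule k A)
    (hM : ∀ a ∈ M, ∀ b ∈ M, a * b ∈ M) (u : AlgGrp A) (hu : gval u ∈ M) :
    gval u⁻¹ ∈ M := by
  obtain ⟨N, hN0, hNP⟩ := hnil
  set a : A := gval u with hadef
  set b : A := gval u⁻¹ with hbdef
  have hab : b + a + a * b = 0 := by
    have h1 := congrArg gval (mul_inv_cancel u)
    rw [gval_mul, gval_one] at h1
    exact h1
  have hba : b + a = -(a * b) := by
    calc b + a = (b + a + a * b) - a * b := by abel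
    _ = -(a * b) := by rw [hab]; abel
  set pw : ℕ → A := fun j => wordProd a (List.replicate j a) with hpwdef
  have hpw0 : pw 0 = a := rfl
  have hpwsucc : ∀ j, pw (j + 1) = pw j * a := by
    intro j
    show wordProd a (List.replicate (j + 1) a) = wordProd a (List.replicate j a) * a
    rw [List.replicate_succ', wordProd_append_singleton]
  have hpwM : ∀ j, pw j ∈ M := by
    intro j
    induction j with
    | zero => exact hu
    | succ j ih => rw [hpwsucc]; exact hM _ ih _ hu
  have hstep : ∀ j, b + ((-1 : ℤ) ^ j) • (pw j * b) ∈ M := by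
    intro j
    induction j with
    | zero =>
        have : b + ((-1 : ℤ) ^ 0) • (pw 0 * b) = -a := by
          rw [pow_zero, one_smul, hpw0]
          calc b + a * b = (b + a + a * b) - a := by abel
          _ = -a := by rw [hab]; abel
        rw [this]
        exact neg_mem hu
    | succ j ih =>
        have hkey : b + ((-1 : ℤ) ^ (j + 1)) • (pw (j + 1) * b)
            = (b + ((-1 : ℤ) ^ j) • (pw j * b)) + ((-1 : ℤ) ^ j) • (pw j * a) := by
          rw [hpwsucc, pow_succ, mul_smul, neg_one_zsmul]
          have h2 : -(pw j * a * b) = pw j * b + pw j * a := by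
            rw [mul_assoc, ← mul_neg, ← hba, mul_add]
          rw [h2, smul_add]
          abel
        rw [hkey]
        exact add_mem ih (zsmul_mem (hM _ (hpwM j) _ hu) _)
  have hzero : pw N * b = 0 := by
    show wordProd a (List.replicate N a) * b = 0
    rw [← wordProd_append_singleton]
    apply hNP
    simp
    omega
  have := hstep N
  rwa [hzero, smul_zero, add_zero] at this

lemma iter_semilinear (F : A ≃+* A)
    (hFsemi : ∀ (c : k) (a : A), F (c • a) = c ^ q • F a) :
    ∀ (i : ℕ) (c : k) (a : A), (⇑F)^[i] (c • a) = c ^ q ^ i • (⇑F)^[i] a := by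
  intro i
  induction i with
  | zero => intro c a; simp
  | succ i ih =>
      intro c a
      rw [Function.iterate_succ_apply, Function.iterate_succ_apply, hFsemi, ih,
        ← pow_mul, ← pow_succ']

/-- Semilinear descent: an `F^[n]`-fixed element of the `k`-span of a set of
`F^[n]`-fixed vectors is a combination with `F^[n]`-fixed coefficients. -/
lemma descent (Q : ℕ) (hQ : Q ≠ 0) (φ : A → A)
    (hadd : ∀ a b : A, φ (a + b) = φ a + φ b)
    (hsemi : ∀ (c : k) (a : A), φ (c • a) = c ^ Q • φ a)
    (s : Set A) (hs : ∀ t ∈ s, φ t = t) (z : A)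
    (hz : z ∈ Submodule.span k s) (hzf : φ z = z) :
    ∃ c : A →₀ k, (c.support : Set A) ⊆ s ∧ (∀ m, (c m) ^ Q = c m) ∧
      z = c.sum fun m r => r • m := by
  classical
  obtain ⟨b, hbs, hspanb, hli⟩ := exists_linearIndependent k s
  rw [← hspanb, Submodule.mem_span_set] at hz
  obtain ⟨c, hcsupp, hcsum⟩ := hz
  have hφsum : ∀ (t : Finset A) (f : A → A), φ (∑ m ∈ t, f m) = ∑ m ∈ t, φ (f m) := by
    intro t f
    induction t using Finset.induction with
    | empty =>
        simpa [zero_pow hQ] using (hsemi 0 0).trans (by simp [zero_pow hQ])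
    | insert _ _ hx ih => rw [Finset.sum_insert hx, Finset.sum_insert hx, hadd, ih]
  set c' : A →₀ k := c.mapRange (· ^ Q) (zero_pow hQ) with hc'def
  have hc'sum : (c'.sum fun m r => r • m) = z := by
    rw [Finsupp.sum_mapRange_index (by intro a; exact zero_smul k a)]
    have h1 : (c.sum fun m r => (r ^ Q) • m) = φ z := by
      rw [← hcsum]
      show ∑ m ∈ c.support, (c m ^ Q) • m = φ (∑ m ∈ c.support, c m • m)
      rw [hφsum]
      refine (Finset.sum_congr rfl fun m hm => ?_).symm
      rw [hsemi, hs m (hbs (hcsupp hm))]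
    rw [h1, hzf]
  have hceq : c' = c := by
    have hsupp' : (c' - c).support ⊆ c.support := by
      intro m hm
      rcases Finset.mem_union.mp (Finsupp.support_sub hm) with h | h
      · exact Finsupp.support_mapRange h
      · exact h
    have hmem : c' - c ∈ Finsupp.supported k k b := by
      rw [Finsupp.mem_supported]
      exact Set.Subset.trans (Set.Subset.trans (by exact_mod_cast hsupp') hcsupp) (le_refl _)
    have hker : Finsupp.linearCombination k (id : A → A) (c' - c) = 0 := by
      rw [map_sub]
      have h1 : Finsupp.linearCombination k (id : A → A) c' = z := by
        rw [Finsupp.linearCombination_apply]; exact hc'sum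
      have h2 : Finsupp.linearCombination k (id : A → A) c = z := by
        rw [Finsupp.linearCombination_apply]; exact hcsum
      rw [h1, h2, sub_self]
    have := linearIndepOn_iff.mp (linearIndependent_subtype_iff.mp hli) (c' - c) hmem hker
    exact sub_eq_zero.mp this
  refine ⟨c, Set.Subset.trans hcsupp hbs, ?_, hcsum.symm⟩
  intro m
  have h1 : c' m = c m := by rw [hceq]
  rw [Finsupp.mapRange_apply] at h1
  exact h1

/-- Existence of an element `l` of `𝔽_{qⁿ} ⊆ k` with `Tr_{𝔽_{qⁿ}/𝔽_q}(l) = 1`. -/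
lemma exists_lambda (hq : ∃ s : ℕ, 0 < s ∧ q = p ^ s) (hn : 0 < n) :
    ∃ l : k, (∑ i ∈ Finset.range n, l ^ q ^ i) = 1 ∧ l ^ q ^ n = l := by
  obtain ⟨s, hs0, hqs⟩ := hq
  have hp2 : 2 ≤ p := (Fact.out : p.Prime).two_le
  have hq2 : 2 ≤ q := by
    rw [hqs]
    calc 2 ≤ p := hp2
    _ = p ^ 1 := (pow_one p).symm
    _ ≤ p ^ s := Nat.pow_le_pow_right (by omega) hs0
  set P : Polynomial k := (∑ i ∈ Finset.range n, Polynomial.X ^ q ^ i) - Polynomial.C 1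
    with hPdef
  have hcoeff : P.coeff (q ^ (n - 1)) = 1 := by
    rw [hPdef, Polynomial.coeff_sub, Polynomial.finset_sum_coeff]
    have h1 : ∀ i ∈ Finset.range n,
        (Polynomial.X ^ q ^ i : Polynomial k).coeff (q ^ (n - 1))
          = if i = n - 1 then 1 else 0 := by
      intro i hi
      rw [Polynomial.coeff_X_pow]
      congr 1
      simp only [eq_iff_iff]
      constructor
      · intro h; exact (Nat.pow_right_injective hq2 h).symm
      · intro h; rw [h]
    rw [Finset.sum_congr rfl h1, Finset.sum_ite_eq' (Finset.range n) (n - 1) (fun _ => (1 : k))]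
    have hmem : n - 1 ∈ Finset.range n := by
      rw [Finset.mem_range]; omega
    rw [if_pos hmem, Polynomial.coeff_C, if_neg (by positivity), sub_zero]
  have hdeg : P.degree ≠ 0 := by
    intro h0
    have h1 : P.natDegree = 0 := Polynomial.natDegree_eq_zero_iff_degree_le_zero.mpr (le_of_eq h0)
    have h2 : P.coeff (q ^ (n - 1)) = 0 :=
      Polynomial.coeff_eq_zero_of_natDegree_lt (by rw [h1]; positivity)
    rw [hcoeff] at h2
    exact one_ne_zero h2
  obtain ⟨l, hl⟩ := IsAlgClosed.exists_root P hdeg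
  have hroot : (∑ i ∈ Finset.range n, l ^ q ^ i) = 1 := by
    have h1 : P.eval l = 0 := hl
    rw [hPdef, Polynomial.eval_sub, Polynomial.eval_finset_sum] at h1
    simp only [Polynomial.eval_pow, Polynomial.eval_X, Polynomial.eval_C] at h1
    linear_combination h1
  refine ⟨l, hroot, ?_⟩
  have hfr : (∑ i ∈ Finset.range n, l ^ q ^ i) ^ q = ∑ i ∈ Finset.range n, (l ^ q ^ i) ^ q := by
    rw [hqs]
    exact sum_pow_char_pow p s (Finset.range n) (fun i => l ^ (p ^ s) ^ i)
  have h2 : ∀ i ∈ Finset.range n, (l ^ q ^ i) ^ q = l ^ q ^ (i + 1) := by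
    intro i _
    rw [← pow_mul, ← pow_succ]
  rw [hroot, one_pow, Finset.sum_congr rfl h2] at hfr
  have h3 : ∑ i ∈ Finset.range n, l ^ q ^ (i + 1)
      = (∑ i ∈ Finset.range n, l ^ q ^ i) + l ^ q ^ n - l := by
    have h4 := Finset.sum_range_succ' (fun i => l ^ q ^ i) n
    have h5 := Finset.sum_range_succ (fun i => l ^ q ^ i) n
    rw [h5] at h4
    simp only [pow_zero, pow_one] at h4
    linear_combination -h4
  rw [h3, hroot] at hfr
  linear_combination -hfr

/-- Let `τ ∈ Â(q)` and `θ = τ∘Tr_n ∈ Â(qⁿ)`.  Let `𝓛_G(θ) ⊆ A` be the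
`k`-linear span of `𝓛(θ) = {a ∈ A(qⁿ) | θ(au) = 1 ∀ u ∈ A(qⁿ)}` and
`L_G(θ) = 1 + 𝓛_G(θ) ⊆ G`.  If `g ∈ L(θ)` and `h ∈ L_G(θ)` satisfy `g = h⁻¹ F(h)`,
then `Fⁿ(h)h⁻¹ ∈ L(τ)` and `ν_τ(Fⁿ(h)h⁻¹) = ν_θ(g)`, i.e.
`τ(Fⁿ(h)h⁻¹ - 1) = θ(g - 1)`. -/
theorem statement7
    (hq : ∃ s : ℕ, 0 < s ∧ q = p ^ s) (hn : 0 < n)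
    (halg : ∀ x : k, ∃ m : ℕ, 0 < m ∧ x ^ p ^ m = x)
    (hnil : IsNilpotentRing A)
    (F : A ≃+* A) (hFsemi : ∀ (c : k) (a : A), F (c • a) = c ^ q • F a)
    (τ : AddChar (fixedAdd F 1) ℂˣ) (θ : AddChar (fixedAdd F n) ℂˣ)
    (hθτ : ∀ (a : fixedAdd F n) (b : fixedAdd F 1),
      (b : A) = trMap F n (a : A) → θ a = τ b)
    (g h : AlgGrp A)
    (hgL : LcP F n θ g)
    (hhL : gval h ∈ Submodule.span k {x : A | x ∈ fixedAdd F n ∧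
        ∀ u : A, u ∈ fixedAdd F n → ∀ w : fixedAdd F n, (w : A) = x * u → θ w = 1})
    (hgh : g = h⁻¹ * algGrpMap F h) :
    -- `Fⁿ(h)h⁻¹` lies in the left centraliser `L(τ) ⊆ G(q)` of `τ` …
    (F (gval (algGrpIter F n h * h⁻¹)) = gval (algGrpIter F n h * h⁻¹) ∧
      ∀ (b c : fixedAdd F 1),
        (c : A) = lact (algGrpIter F n h * h⁻¹)⁻¹ (b : A) → τ c = τ b) ∧
    -- … and `ν_τ(Fⁿ(h)h⁻¹) = ν_θ(g)`.
    (∀ (b : fixedAdd F 1) (a : fixedAdd F n),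
        (b : A) = gval (algGrpIter F n h * h⁻¹) → (a : A) = gval g → τ b = θ a) := by
  classical
  have hq2 : 2 ≤ q := by
    obtain ⟨s, hs0, hqs⟩ := hq
    have hp2 : 2 ≤ p := (Fact.out : p.Prime).two_le
    rw [hqs]
    calc 2 ≤ p := hp2
    _ = p ^ 1 := (pow_one p).symm
    _ ≤ p ^ s := Nat.pow_le_pow_right (by omega) hs0
  have hQ0 : q ^ n ≠ 0 := pow_ne_zero n (by omega)
  -- notation
  set xg : A := gval g with hxgdef
  set η : A := gval h with hηdef
  set η' : A := gval h⁻¹ with hη'def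
  set Y : AlgGrp A := algGrpIter F n h * h⁻¹ with hYdef
  set Lset : Set A := {x : A | x ∈ fixedAdd F n ∧
      ∀ u : A, u ∈ fixedAdd F n → ∀ w : fixedAdd F n, (w : A) = x * u → θ w = 1}
    with hLsetdef
  set V : Submodule k A := Submodule.span k Lset with hVdef
  set T : Set A := {v : A | ∃ a ∈ Lset, ∃ u ∈ fixedAdd F n, v = a * u} with hTdef
  set J : Submodule k A := Submodule.span k T with hJdef
  set M : Submodule k A := Submodule.span k {a : A | a ∈ fixedAdd F n} with hMdef
  -- basic fixed-point facts
  have hfix_mul : ∀ {a b : A}, (⇑F)^[n] a = a → (⇑F)^[n] b = b → (⇑F)^[n] (a * b) = a * b := by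
    intro a b ha hb; rw [iterate_map_mul, ha, hb]
  have hfix_of_1 : ∀ {a : A}, F a = a → (⇑F)^[n] a = a := fun ha => Function.iterate_fixed ha n
  have hfixF : ∀ {a : A}, (⇑F)^[n] a = a → (⇑F)^[n] (F a) = F a := by
    intro a ha
    have h1 : (⇑F)^[n] (F a) = F ((⇑F)^[n] a) := by
      rw [← Function.iterate_succ_apply, Function.iterate_succ_apply']
    rw [h1, ha]
  have hfixFi : ∀ (i : ℕ) {a : A}, (⇑F)^[n] a = a → (⇑F)^[n] ((⇑F)^[i] a) = (⇑F)^[i] a := by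
    intro i
    induction i with
    | zero => intro a ha; exact ha
    | succ i ih =>
        intro a ha
        rw [Function.iterate_succ_apply']
        exact hfixF (ih ha)
  -- trace facts
  have htr_fix : ∀ {v : A}, (⇑F)^[n] v = v → F (trMap F n v) = trMap F n v := by
    intro v hv
    have h1 : F (trMap F n v) = ∑ i ∈ Finset.range n, (⇑F)^[i + 1] v := by
      simp only [trMap]
      rw [map_sum F]
      exact Finset.sum_congr rfl fun i _ => (Function.iterate_succ_apply' F i v).symm
    rw [h1]
    simp only [trMap]
    calc ∑ i ∈ Finset.range n, (⇑F)^[i + 1] v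
        = (∑ i ∈ Finset.range (n + 1), (⇑F)^[i] v) - (⇑F)^[0] v :=
          eq_sub_of_add_eq (Finset.sum_range_succ' (fun i => (⇑F)^[i] v) n).symm
      _ = (∑ i ∈ Finset.range n, (⇑F)^[i] v) + (⇑F)^[n] v - v := by
          rw [Finset.sum_range_succ]; rfl
      _ = ∑ i ∈ Finset.range n, (⇑F)^[i] v := by rw [hv]; abel
  have htr_F : ∀ {v : A}, (⇑F)^[n] v = v → trMap F n (F v) = trMap F n v := by
    intro v hv
    have h1 : trMap F n (F v) = F (trMap F n v) := by
      simp only [trMap]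
      rw [map_sum F]
      exact Finset.sum_congr rfl fun i _ => by
        rw [← Function.iterate_succ_apply, Function.iterate_succ_apply']
    rw [h1, htr_fix hv]
  -- θ is invariant under F
  have hθF : ∀ (w w' : fixedAdd F n), (w' : A) = F (w : A) → θ w' = θ w := by
    intro w w' hw'
    have hwfix : (⇑F)^[n] (w : A) = w := w.2
    have htrw : trMap F n (w : A) ∈ fixedAdd F 1 := htr_fix hwfix
    have htrw' : trMap F n ((w' : A)) = trMap F n (w : A) := by rw [hw', htr_F hwfix]
    have htrw'1 : trMap F n ((w' : A)) ∈ fixedAdd F 1 := by rw [htrw']; exact htrw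
    have h1 : θ w = τ ⟨trMap F n (w : A), htrw⟩ := hθτ w ⟨_, htrw⟩ rfl
    have h2 : θ w' = τ ⟨trMap F n ((w' : A)), htrw'1⟩ := hθτ w' ⟨_, htrw'1⟩ rfl
    rw [h1, h2]
    congr 1
    exact Subtype.ext htrw'
  -- structure of Lset
  have hLmul : ∀ {a u : A}, a ∈ Lset → u ∈ fixedAdd F n → a * u ∈ Lset := by
    intro a u ha hu
    refine ⟨hfix_mul ha.1 hu, ?_⟩
    intro u' hu' w hw
    exact ha.2 (u * u') (hfix_mul hu hu') w (by rw [hw, mul_assoc])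
  have hLF : ∀ {a : A}, a ∈ Lset → F a ∈ Lset := by
    intro a ha
    refine ⟨hfixF ha.1, ?_⟩
    intro u hu w hw
    have hu₀fix : (⇑F)^[n] (F.symm u) = F.symm u := by
      apply F.injective
      calc F ((⇑F)^[n] (F.symm u))
          = (⇑F)^[n] (F (F.symm u)) := by
            rw [← Function.iterate_succ_apply' F n, Function.iterate_succ_apply]
        _ = (⇑F)^[n] u := by rw [RingEquiv.apply_symm_apply]
        _ = u := hu
        _ = F (F.symm u) := (RingEquiv.apply_symm_apply F u).symm
    have hw0 : a * F.symm u ∈ fixedAdd F n := hfix_mul ha.1 hu₀fix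
    have hw' : (w : A) = F (((⟨a * F.symm u, hw0⟩ : fixedAdd F n) : A)) := by
      rw [hw]
      show F a * u = F (a * F.symm u)
      rw [map_mul, RingEquiv.apply_symm_apply]
    rw [hθF ⟨a * F.symm u, hw0⟩ w hw']
    exact ha.2 (F.symm u) hu₀fix ⟨a * F.symm u, hw0⟩ rfl
  have hTL : T ⊆ Lset := by
    rintro v ⟨a, ha, u, hu, rfl⟩
    exact hLmul ha hu
  have hJV : J ≤ V := Submodule.span_mono hTL
  have hVM : V ≤ M := Submodule.span_mono (fun a ha => ha.1)
  have hVF : ∀ {v : A}, v ∈ V → F v ∈ V := by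
    intro v hv
    refine Submodule.span_induction ?_ ?_ ?_ ?_ hv
    · intro a ha
      exact Submodule.subset_span (hLF ha)
    · simp only [map_zero]
      exact Submodule.zero_mem _
    · intro a b _ _ iha ihb
      rw [map_add]
      exact add_mem iha ihb
    · intro c a _ ih
      rw [hFsemi]
      exact Submodule.smul_mem _ _ ih
  have hVFi : ∀ (i : ℕ) {v : A}, v ∈ V → (⇑F)^[i] v ∈ V := by
    intro i
    induction i with
    | zero => intro v hv; exact hv
    | succ i ih =>
        intro v hv
        rw [Function.iterate_succ_apply']
        exact hVF (ih hv)
  have hVfixJ : ∀ {v : A}, v ∈ V → ∀ {u : A}, u ∈ fixedAdd F n → v * u ∈ J := by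
    intro v hv
    refine Submodule.span_induction (p := fun v _ => ∀ {u : A}, u ∈ fixedAdd F n → v * u ∈ J)
      ?_ ?_ ?_ ?_ hv <;> beta_reduce
    · intro a ha u hu
      exact Submodule.subset_span ⟨a, ha, u, hu, rfl⟩
    · intro u _
      rw [zero_mul]
      exact Submodule.zero_mem _
    · intro a b _ _ iha ihb u hu
      rw [add_mul]
      exact add_mem (iha hu) (ihb hu)
    · intro c a _ ih u hu
      rw [smul_mul_assoc]
      exact Submodule.smul_mem _ _ (ih hu)
  have hVfixV : ∀ {v : A}, v ∈ V → ∀ {u : A}, u ∈ fixedAdd F n → v * u ∈ V := by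
    intro v hv u hu
    exact hJV (hVfixJ hv hu)
  have hVMJ : ∀ {v : A}, v ∈ V → ∀ {w : A}, w ∈ M → v * w ∈ J := by
    intro v hv w hw
    refine Submodule.span_induction (p := fun w _ => v * w ∈ J) ?_ ?_ ?_ ?_ hw <;> beta_reduce
    · intro u hu
      exact hVfixJ hv hu
    · rw [mul_zero]; exact Submodule.zero_mem _
    · intro a b _ _ iha ihb
      rw [mul_add]; exact add_mem iha ihb
    · intro c a _ ih
      rw [mul_smul_comm]; exact Submodule.smul_mem _ _ ih
  have hMfixM : ∀ {v : A}, v ∈ M → ∀ {u : A}, u ∈ fixedAdd F n → v * u ∈ M := by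
    intro v hv
    refine Submodule.span_induction (p := fun v _ => ∀ {u : A}, u ∈ fixedAdd F n → v * u ∈ M)
      ?_ ?_ ?_ ?_ hv <;> beta_reduce
    · intro a ha u hu
      exact Submodule.subset_span (hfix_mul ha hu)
    · intro u _; rw [zero_mul]; exact Submodule.zero_mem _
    · intro a b _ _ iha ihb u hu
      rw [add_mul]; exact add_mem (iha hu) (ihb hu)
    · intro c a _ ih u hu
      rw [smul_mul_assoc]; exact Submodule.smul_mem _ _ (ih hu)
  have hMmul : ∀ a ∈ M, ∀ b ∈ M, a * b ∈ M := by
    intro a ha b hb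
    refine Submodule.span_induction (p := fun b _ => a * b ∈ M) ?_ ?_ ?_ ?_ hb <;> beta_reduce
    · intro u hu
      exact hMfixM ha hu
    · rw [mul_zero]; exact Submodule.zero_mem _
    · intro v w _ _ ihv ihw
      rw [mul_add]; exact add_mem ihv ihw
    · intro c v _ ih
      rw [mul_smul_comm]; exact Submodule.smul_mem _ _ ih
  have hVmul : ∀ a ∈ V, ∀ b ∈ V, a * b ∈ V := by
    intro a ha b hb
    refine Submodule.span_induction (p := fun b _ => a * b ∈ V) ?_ ?_ ?_ ?_ hb <;> beta_reduce
    · intro u hu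
      exact hVfixV ha hu.1
    · rw [mul_zero]; exact Submodule.zero_mem _
    · intro v w _ _ ihv ihw
      rw [mul_add]; exact add_mem ihv ihw
    · intro c v _ ih
      rw [mul_smul_comm]; exact Submodule.smul_mem _ _ ih
  -- θ vanishes on Fⁿ-fixed elements of J
  have hKθ : ∀ {z : A}, z ∈ J → ∀ (hz : z ∈ fixedAdd F n), θ ⟨z, hz⟩ = 1 := by
    intro z hzJ hz
    obtain ⟨c, hcsupp, hcpow, hcsum⟩ := descent (q ^ n) hQ0 ((⇑F)^[n])
      (fun a b => by rw [iterate_map_add]) (iter_semilinear F hFsemi n) T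
      (fun t ht => (hTL ht).1) z hzJ hz
    let Kθ : AddSubgroup A :=
      { carrier := {v : A | ∃ hv : v ∈ fixedAdd F n, θ ⟨v, hv⟩ = 1}
        zero_mem' := ⟨(fixedAdd F n).zero_mem, by
          rw [show (⟨0, (fixedAdd F n).zero_mem⟩ : fixedAdd F n) = 0 from rfl]
          exact θ.map_zero_eq_one⟩
        add_mem' := by
          rintro a b ⟨ha, hθa⟩ ⟨hb, hθb⟩
          refine ⟨add_mem ha hb, ?_⟩
          rw [show (⟨a + b, add_mem ha hb⟩ : fixedAdd F n) = ⟨a, ha⟩ + ⟨b, hb⟩ from rfl,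
            θ.map_add_eq_mul, hθa, hθb, one_mul]
        neg_mem' := by
          rintro a ⟨ha, hθa⟩
          refine ⟨neg_mem ha, ?_⟩
          rw [show (⟨-a, neg_mem ha⟩ : fixedAdd F n) = -⟨a, ha⟩ from rfl,
            θ.map_neg_eq_inv, hθa, inv_one] }
    have hsummem : ∀ m ∈ c.support, c m • m ∈ Kθ := by
      intro m hm
      obtain ⟨a, haL, u, hu, rfl⟩ := hcsupp hm
      have h1 : c (a * u) • (a * u) = a * (c (a * u) • u) := (mul_smul_comm _ _ _).symm
      have hcu : c (a * u) • u ∈ fixedAdd F n := by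
        show (⇑F)^[n] _ = _
        rw [iter_semilinear F hFsemi n, hcpow, hu]
      have hmemfix : a * (c (a * u) • u) ∈ fixedAdd F n := hfix_mul haL.1 hcu
      refine ⟨h1 ▸ hmemfix, ?_⟩
      have h2 := haL.2 (c (a * u) • u) hcu ⟨_, hmemfix⟩ rfl
      convert h2 using 2
      exact Subtype.ext h1
    have hzK : z ∈ Kθ := by
      rw [hcsum]
      exact AddSubgroup.sum_mem Kθ hsummem
    obtain ⟨hz', hθz⟩ := hzK
    exact hθz
  -- τ vanishes on F-fixed elements of J
  obtain ⟨l, hl1, hlq⟩ := exists_lambda (k := k) hq hn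
  have hKτ : ∀ {z : A}, z ∈ J → F z = z → ∀ (hz1 : z ∈ fixedAdd F 1), τ ⟨z, hz1⟩ = 1 := by
    intro z hzJ hzF hz1
    have hzfix : ∀ i, (⇑F)^[i] z = z := fun i => Function.iterate_fixed hzF i
    have hlz : l • z ∈ J := Submodule.smul_mem _ _ hzJ
    have hlzfix : l • z ∈ fixedAdd F n := by
      show (⇑F)^[n] (l • z) = l • z
      rw [iter_semilinear F hFsemi n, hlq, hzfix n]
    have htr : trMap F n (l • z) = z := by
      simp only [trMap]
      have h1 : ∀ i ∈ Finset.range n, (⇑F)^[i] (l • z) = l ^ q ^ i • z := by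
        intro i _
        rw [iter_semilinear F hFsemi, hzfix i]
      rw [Finset.sum_congr rfl h1, ← Finset.sum_smul, hl1, one_smul]
    have hθlz : θ ⟨l • z, hlzfix⟩ = 1 := hKθ hlz hlzfix
    have h2 := hθτ ⟨l • z, hlzfix⟩ ⟨z, hz1⟩ htr.symm
    rw [← h2, hθlz]
  -- the element Y = Fⁿ(h)h⁻¹ is F-fixed
  have hxfix : (⇑F)^[n] xg = xg := hgL.1
  have hgfixu : algGrpIter F n g = g :=
    gval_injective (by rw [gval_algGrpIter]; exact hxfix)
  have hmapFh : algGrpMap F h = h * g := by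
    rw [hgh, ← mul_assoc, mul_inv_cancel, one_mul]
  have hiter_comm : ∀ (m : ℕ) (u : AlgGrp A),
      algGrpIter F m (algGrpMap F u) = algGrpMap F (algGrpIter F m u) := by
    intro m
    induction m with
    | zero => intro u; rfl
    | succ m ih =>
        intro u
        show algGrpMap F (algGrpIter F m (algGrpMap F u)) = _
        rw [ih]
        rfl
  have hYfixu : algGrpMap F Y = Y := by
    rw [hYdef]
    calc algGrpMap F (algGrpIter F n h * h⁻¹)
        = algGrpIter F n (algGrpMap F h) * (algGrpMap F h)⁻¹ := by
          rw [map_mul, map_inv, hiter_comm]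
      _ = algGrpIter F n h * algGrpIter F n g * (g⁻¹ * h⁻¹) := by
          rw [hmapFh, map_mul, mul_inv_rev]
      _ = algGrpIter F n h * h⁻¹ := by rw [hgfixu]; group
  have hYfix : F (gval Y) = gval Y := by
    conv_lhs => rw [← gval_algGrpMap F Y, hYfixu]
  -- the basic recursion F η = xg + η + η * xg and its telescoping
  have hFη : F η = xg + η + η * xg := by
    have h1 := congrArg gval hmapFh
    rw [gval_algGrpMap, gval_mul] at h1
    exact h1
  have he2 : ∀ m : ℕ, (⇑F)^[m] η = η + (∑ i ∈ Finset.range m, (⇑F)^[i] xg)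
      + ∑ i ∈ Finset.range m, (⇑F)^[i] (η * xg) := by
    intro m
    induction m with
    | zero => simp
    | succ m ih =>
        rw [Function.iterate_succ_apply, hFη, iterate_map_add, iterate_map_add, ih,
          Finset.sum_range_succ, Finset.sum_range_succ]
        abel
  have he3 : gval Y = η' + (⇑F)^[n] η + (⇑F)^[n] η * η' := by
    rw [hYdef]
    show gval (algGrpIter F n h * h⁻¹) = _
    rw [gval_mul, gval_algGrpIter]
  have hzero : η' + η + η * η' = 0 := by
    have h1 := congrArg gval (mul_inv_cancel h)
    rw [gval_mul, gval_one] at h1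
    exact h1
  have hδeq : gval Y - trMap F n xg =
      (∑ i ∈ Finset.range n, (⇑F)^[i] (η * xg))
        + (∑ i ∈ Finset.range n, (⇑F)^[i] xg) * η'
        + (∑ i ∈ Finset.range n, (⇑F)^[i] (η * xg)) * η' := by
    have h1 : gval Y - trMap F n xg = (η' + η + η * η')
        + ((∑ i ∈ Finset.range n, (⇑F)^[i] (η * xg))
          + (∑ i ∈ Finset.range n, (⇑F)^[i] xg) * η'
          + (∑ i ∈ Finset.range n, (⇑F)^[i] (η * xg)) * η') := by
      rw [he3, he2 n]
      simp only [trMap]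
      rw [add_mul, add_mul]
      abel
    rw [h1, hzero, zero_add]
  -- xg ∈ Lset
  have hxgL : xg ∈ Lset := by
    have hgmem : g ∈ Gfix F n := hxfix
    have hxg' : (⇑F)^[n] (gval g⁻¹) = gval g⁻¹ := (Gfix F n).inv_mem hgmem
    have hrel : xg + gval g⁻¹ + gval g⁻¹ * xg = 0 := by
      have h1 := congrArg gval (inv_mul_cancel g)
      rw [gval_mul, gval_one] at h1
      exact h1
    have hx'ann : ∀ u : A, u ∈ fixedAdd F n →
        ∀ w : fixedAdd F n, (w : A) = gval g⁻¹ * u → θ w = 1 := by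
      intro u hu w hw
      have hmem : gval g⁻¹ * u ∈ fixedAdd F n := hfix_mul hxg' hu
      have hsum : u + gval g⁻¹ * u ∈ fixedAdd F n := add_mem hu hmem
      have h2 := hgL.2 ⟨u, hu⟩ ⟨u + gval g⁻¹ * u, hsum⟩ rfl
      have h3 : (⟨u + gval g⁻¹ * u, hsum⟩ : fixedAdd F n)
          = ⟨u, hu⟩ + ⟨gval g⁻¹ * u, hmem⟩ := rfl
      rw [h3, θ.map_add_eq_mul] at h2
      have h4 : θ ⟨gval g⁻¹ * u, hmem⟩ = 1 := by
        have h5 : θ ⟨u, hu⟩ * θ ⟨gval g⁻¹ * u, hmem⟩ = θ ⟨u, hu⟩ * 1 := by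
          rw [mul_one, h2]
        exact mul_left_cancel h5
      rw [show w = ⟨gval g⁻¹ * u, hmem⟩ from Subtype.ext hw]
      exact h4
    refine ⟨hxfix, ?_⟩
    intro u hu w hw
    have hxgval : xg = -gval g⁻¹ - gval g⁻¹ * xg := by
      calc xg = (xg + gval g⁻¹ + gval g⁻¹ * xg) - gval g⁻¹ - gval g⁻¹ * xg := by abel
        _ = -gval g⁻¹ - gval g⁻¹ * xg := by rw [hrel]; abel
    have hxu : xg * u = -(gval g⁻¹ * u) - gval g⁻¹ * (xg * u) := by
      calc xg * u = (-gval g⁻¹ - gval g⁻¹ * xg) * u := by rw [← hxgval]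
        _ = -(gval g⁻¹ * u) - gval g⁻¹ * (xg * u) := by
            rw [sub_mul, neg_mul, mul_assoc]
    have hmem1 : gval g⁻¹ * u ∈ fixedAdd F n := hfix_mul hxg' hu
    have hmemxu : xg * u ∈ fixedAdd F n := hfix_mul hxfix hu
    have hmem2 : gval g⁻¹ * (xg * u) ∈ fixedAdd F n := hfix_mul hxg' hmemxu
    have hw' : w = -(⟨gval g⁻¹ * u, hmem1⟩ : fixedAdd F n)
        - ⟨gval g⁻¹ * (xg * u), hmem2⟩ := by
      apply Subtype.ext
      rw [hw]
      exact hxu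
    rw [hw', sub_eq_add_neg, θ.map_add_eq_mul, θ.map_neg_eq_inv, θ.map_neg_eq_inv,
      hx'ann u hu ⟨_, hmem1⟩ rfl, hx'ann (xg * u) hmemxu ⟨_, hmem2⟩ rfl]
    simp
  -- memberships of the pieces
  have hηV : η ∈ V := hhL
  have hSxV : (∑ i ∈ Finset.range n, (⇑F)^[i] xg) ∈ V :=
    Submodule.sum_mem _ fun i _ => hVFi i (Submodule.subset_span hxgL)
  have hSηxJ : (∑ i ∈ Finset.range n, (⇑F)^[i] (η * xg)) ∈ J := by
    refine Submodule.sum_mem _ fun i _ => ?_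
    rw [iterate_map_mul]
    exact hVfixJ (hVFi i hηV) (hfixFi i hxfix)
  have hη'M : η' ∈ M := gval_inv_mem hnil M hMmul h (hVM hηV)
  have hδJ : gval Y - trMap F n xg ∈ J := by
    rw [hδeq]
    exact add_mem (add_mem hSηxJ (hVMJ hSxV hη'M)) (hVMJ (hJV hSηxJ) hη'M)
  have htrfix1 : F (trMap F n xg) = trMap F n xg := htr_fix hxfix
  have hδfix : F (gval Y - trMap F n xg) = gval Y - trMap F n xg := by
    rw [map_sub, hYfix, htrfix1]
  -- assembling the three statements
  refine ⟨⟨hYfix, ?_⟩, ?_⟩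
  · -- Y ∈ L(τ)
    intro b c hc
    have hYinvu : algGrpMap F Y⁻¹ = Y⁻¹ := by rw [map_inv, hYfixu]
    have hYinvfix : F (gval Y⁻¹) = gval Y⁻¹ := by
      conv_lhs => rw [← gval_algGrpMap F Y⁻¹, hYinvu]
    have hYV : gval Y ∈ V := by
      have h1 : gval Y = trMap F n xg + (gval Y - trMap F n xg) := by abel
      rw [h1]
      refine add_mem ?_ (hJV hδJ)
      simp only [trMap]
      exact hSxV
    have hYinvV : gval Y⁻¹ ∈ V := gval_inv_mem hnil V hVmul Y hYV
    have hb1 : F (b : A) = b := b.2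
    have hbfix : (⇑F)^[n] (b : A) = b := hfix_of_1 hb1
    have hzJ : gval Y⁻¹ * (b : A) ∈ J := hVfixJ hYinvV hbfix
    have hzF : F (gval Y⁻¹ * (b : A)) = gval Y⁻¹ * (b : A) := by
      rw [map_mul, hYinvfix, hb1]
    have hz1 : gval Y⁻¹ * (b : A) ∈ fixedAdd F 1 := hzF
    have hτz : τ ⟨gval Y⁻¹ * (b : A), hz1⟩ = 1 := hKτ hzJ hzF hz1
    have hceq : c = b + ⟨gval Y⁻¹ * (b : A), hz1⟩ := by
      apply Subtype.ext
      rw [hc]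
      rfl
    rw [hceq, τ.map_add_eq_mul, hτz, mul_one]
  · -- ν_τ(Y) = ν_θ(g)
    intro b a hb ha
    have hδ1 : gval Y - trMap F n xg ∈ fixedAdd F 1 := hδfix
    have htr1 : trMap F n xg ∈ fixedAdd F 1 := htrfix1
    have hbeq : b = ⟨trMap F n xg, htr1⟩ + ⟨gval Y - trMap F n xg, hδ1⟩ := by
      apply Subtype.ext
      rw [hb]
      show gval Y = trMap F n xg + (gval Y - trMap F n xg)
      abel
    have haeq : a = ⟨xg, hxfix⟩ := Subtype.ext ha
    have hτtr : τ ⟨trMap F n xg, htr1⟩ = θ ⟨xg, hxfix⟩ :=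
      (hθτ ⟨xg, hxfix⟩ ⟨trMap F n xg, htr1⟩ rfl).symm
    have hτδ : τ ⟨gval Y - trMap F n xg, hδ1⟩ = 1 := hKτ hδJ hδfix hδ1
    rw [hbeq, τ.map_add_eq_mul, hτtr, hτδ, mul_one, haeq]

end OverClosure

end Shintani
end
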